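/- arXiv:2402.08607 — 2 statements merged into one kernel-verified Lean document; each statement's English description precedes it below -/
import Mathlib

section
/- (Local error bound for the midpoint BUG integrator.) Let L, B, M₂, M₃, h_max > 0 and integers m, n, r, r̂, q. There exists C > 0, depending only on L, B, M₂, M₃ and h_max, with the following property. Let F : ℝ × ℝ^{m×n} → ℝ^{m×n} be continuous with ‖F(t,Y) − F(t,Z)‖ ≤ L‖Y − Z‖ and ‖F(t,Y)‖ ≤ B for all t, Y, Z. Let 0 < h ≤ h_max, t₁ = t₀ + h, t_{1/2} = t₀ + h/2. Let A : [t₀,t₁] → ℝ^{m×n} be three times continuously differentiable with A'(t) = F(t,A(t)), ‖A''‖ ≤ M₂, ‖A'''‖ ≤ M₃, and A(t₀) = Y₀ = U₀ S₀ V₀ᵀ with orthonormal-column U₀ ∈ ℝ^{m×r}, V₀ ∈ ℝ^{n×r}. Assume the normal-component bounds: for all t ∈ [t₀,t₁], all orthonormal-column U ∈ ℝ^{m×r}, V ∈ ℝ^{n×r} and all S ∈ ℝ^{r×r}, ‖(I − UUᵀ) F(t, USVᵀ) (I − VVᵀ)‖ ≤ ε_r, and the same with r replaced by r̂ and bound ε_{r̂}.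 Perform the augmented BUG half-step: let K, Lm solve K'(t) = F(t, K(t) V₀ᵀ) V₀, K(t₀) = U₀S₀ and Lm'(t) = F(t, U₀ Lm(t)ᵀ)ᵀ U₀, Lm(t₀) = V₀S₀ᵀ on [t₀, t_{1/2}]; let Û ∈ ℝ^{m×r̂}, V̂ ∈ ℝ^{n×r̂} have orthonormal columns with Û Ûᵀ U₀ = U₀, Û Ûᵀ K(t_{1/2}) = K(t_{1/2}), V̂ V̂ᵀ V₀ = V₀, V̂ V̂ᵀ Lm(t_{1/2}) = Lm(t_{1/2}); let Ŝ solve Ŝ'(t) = Ûᵀ F(t, Û Ŝ(t) V̂ᵀ) V̂ on [t₀, t_{1/2}] with Ŝ(t₀) = Ûᵀ Y₀ V̂, and set Ŷ_{1/2} = Û Ŝ(t_{1/2}) V̂ᵀ. Perform the Galerkin step: let Ū ∈ ℝ^{m×q}, V̄ ∈ ℝ^{n×q} have orthonormal columns with Ū Ūᵀ Û = Û, Ū Ūᵀ (F(t_{1/2}, Ŷ_{1/2}) V̂) = F(t_{1/2}, Ŷ_{1/2}) V̂, V̄ V̄ᵀ V̂ = V̂, V̄ V̄ᵀ (F(t_{1/2},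 Ŷ_{1/2})ᵀ Û) = F(t_{1/2}, Ŷ_{1/2})ᵀ Û; let S̄ solve S̄'(t) = Ūᵀ F(t, Ū S̄(t) V̄ᵀ) V̄ on [t₀,t₁] with S̄(t₀) = Ūᵀ Y₀ V̄, and set Ȳ₁ = Ū S̄(t₁) V̄ᵀ. Then ‖Ȳ₁ − A(t₁)‖ ≤ C h (h² + h ε_r + ε_{r̂}). -/
/-!
Each stage of the integrator is a projected flow `Y' = P F(t, Y) Q` with orthogonal
projections `P`, `Q`, and by Grönwall such a flow started on `A` stays within
`h e^{Lh}` times its defect `sup ‖F(t, A) - P F(t, A) Q‖` of the exact solution.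

The K- and L-steps are projected flows with defect at most `B`, so they stay `O(h)`-close to
`A`; since `Û`, `V̂` contain their values at both ends, the mean value theorem shows that `Û`
captures `F(t₀, Y₀) V₀` and `V̂` captures `F(t₀, Y₀)ᵀ U₀` up to `O(h)`. The rest of
`F(t₀, Y₀)` is its rank-`r` normal component, so the half-step Galerkin flow has defect
`O(h + ε_r)` and `‖Ŷ_{1/2} - A(t_{1/2})‖ = O(h (h + ε_r))`. By construction `Ū`, `V̄` capture
`F(t_{1/2}, Ŷ_{1/2})` up to its rank-`r̂` normal component, so the final Galerkin flow has
defect `O(ε_r̂ + h (h + ε_r))` at the midpoint. Away from the midpoint its defect grows by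
`(t - t_{1/2}) D + O(h²)` with `D` the defect of `A''(t_{1/2})`, and this linear term averages
out over the step: Grönwall applied to `Ȳ - A + ψ D`, where `ψ(t) = (t - t_{1/2})²/2 - h²/8`
vanishes at both ends, sees only the `O(h²)` remainder.
-/

open Matrix Set

attribute [local instance] Matrix.frobeniusNormedAddCommGroup Matrix.frobeniusNormedSpace

section Projection

variable {m n k : Type*} [Fintype m] [Fintype n] [Fintype k]

theorem Matrix.frobenius_norm_sq_eq_trace (X : Matrix m n ℝ) : ‖X‖ ^ 2 = trace (Xᵀ * X) := by
  rw [frobenius_norm_def, ← Real.rpow_natCast, ← Real.rpow_mul (by positivity)]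
  norm_num [trace, Matrix.mul_apply, Finset.sum_comm (γ := m), sq]

theorem IsStarProjection.transpose_eq {P : Matrix m m ℝ} (hP : IsStarProjection P) : Pᵀ = P := by
  simpa [star_eq_conjTranspose] using hP.isSelfAdjoint.star_eq

theorem IsStarProjection.frobenius_norm_mul_sq {P : Matrix m m ℝ} (hP : IsStarProjection P)
    (X : Matrix m n ℝ) : ‖P * X‖ ^ 2 = trace (Xᵀ * P * X) := by
  rw [frobenius_norm_sq_eq_trace, transpose_mul, hP.transpose_eq, Matrix.mul_assoc,
    ← Matrix.mul_assoc P, hP.isIdempotentElem.eq, Matrix.mul_assoc]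

theorem IsStarProjection.frobenius_norm_mul_left_le [DecidableEq m] {P : Matrix m m ℝ}
    (hP : IsStarProjection P) (X : Matrix m k ℝ) : ‖P * X‖ ≤ ‖X‖ := by
  -- Pythagoras: `‖P X‖² + ‖(1 - P) X‖² = ‖X‖²`
  have h := congrArg₂ (· + ·) (hP.frobenius_norm_mul_sq X) (hP.one_sub.frobenius_norm_mul_sq X)
  simp only [Matrix.mul_sub, Matrix.sub_mul, Matrix.mul_one, trace_sub] at h
  rw [add_sub_cancel, ← frobenius_norm_sq_eq_trace] at h
  nlinarith [norm_nonneg (P * X), norm_nonneg X, sq_nonneg ‖(1 - P) * X‖]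

theorem IsStarProjection.frobenius_norm_mul_right_le [DecidableEq n] {Q : Matrix n n ℝ}
    (hQ : IsStarProjection Q) (X : Matrix k n ℝ) : ‖X * Q‖ ≤ ‖X‖ := by
  rw [← frobenius_norm_transpose (X * Q), transpose_mul, hQ.transpose_eq,
    ← frobenius_norm_transpose X]
  exact hQ.frobenius_norm_mul_left_le Xᵀ

theorem IsStarProjection.frobenius_norm_mul_mul_le [DecidableEq m] [DecidableEq n]
    {P : Matrix m m ℝ} {Q : Matrix n n ℝ} (hP : IsStarProjection P) (hQ : IsStarProjection Q)
    (X : Matrix m n ℝ) : ‖P * X * Q‖ ≤ ‖X‖ :=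
  (hQ.frobenius_norm_mul_right_le _).trans (hP.frobenius_norm_mul_left_le X)

theorem IsStarProjection.frobenius_norm_sub_mul_mul_le [DecidableEq m] [DecidableEq n]
    {P : Matrix m m ℝ} {Q : Matrix n n ℝ} (hP : IsStarProjection P) (hQ : IsStarProjection Q)
    (X W : Matrix m n ℝ) : ‖X - P * X * Q‖ ≤ ‖W - P * W * Q‖ + 2 * ‖X - W‖ := by
  have h : X - P * X * Q = (W - P * W * Q) + ((X - W) - P * (X - W) * Q) := by
    simp only [Matrix.mul_sub, Matrix.sub_mul]
    abel
  rw [h]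
  refine (norm_add_le _ _).trans (add_le_add le_rfl ?_)
  linarith [norm_sub_le (X - W) (P * (X - W) * Q), hP.frobenius_norm_mul_mul_le hQ (X - W)]

theorem IsStarProjection.frobenius_norm_sub_mul_mul_le_two_mul [DecidableEq m] [DecidableEq n]
    {P : Matrix m m ℝ} {Q : Matrix n n ℝ} (hP : IsStarProjection P) (hQ : IsStarProjection Q)
    (X : Matrix m n ℝ) : ‖X - P * X * Q‖ ≤ 2 * ‖X‖ := by
  simpa using hP.frobenius_norm_sub_mul_mul_le hQ X 0

theorem Matrix.isStarProjection_mul_transpose [DecidableEq k] {U : Matrix m k ℝ}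
    (hU : Uᵀ * U = 1) : IsStarProjection (U * Uᵀ) := by
  refine ⟨?_, ?_⟩
  · rw [IsIdempotentElem, Matrix.mul_assoc, ← Matrix.mul_assoc Uᵀ, hU, Matrix.one_mul]
  · simp [IsSelfAdjoint, star_eq_conjTranspose, transpose_mul]

theorem Matrix.frobenius_norm_mul_of_transpose_mul_self [DecidableEq k] {V : Matrix n k ℝ}
    (hV : Vᵀ * V = 1) (X : Matrix k m ℝ) : ‖V * X‖ = ‖X‖ := by
  have h : ‖V * X‖ ^ 2 = ‖X‖ ^ 2 := by
    rw [frobenius_norm_sq_eq_trace, frobenius_norm_sq_eq_trace, transpose_mul, Matrix.mul_assoc,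
      ← Matrix.mul_assoc Vᵀ, hV, Matrix.one_mul]
  exact (pow_left_inj₀ (norm_nonneg _) (norm_nonneg _) two_ne_zero).mp h

theorem Matrix.frobenius_norm_mul_transpose [DecidableEq k] {V : Matrix n k ℝ}
    (hV : Vᵀ * V = 1) (X : Matrix m k ℝ) : ‖X * Vᵀ‖ = ‖X‖ := by
  rw [← frobenius_norm_transpose, transpose_mul, transpose_transpose,
    frobenius_norm_mul_of_transpose_mul_self hV, frobenius_norm_transpose]

theorem Matrix.frobenius_norm_mul_le_of_transpose_mul_self [DecidableEq n] [DecidableEq k]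
    {V : Matrix n k ℝ} (hV : Vᵀ * V = 1) (X : Matrix m n ℝ) : ‖X * V‖ ≤ ‖X‖ := by
  rw [← frobenius_norm_mul_transpose hV, Matrix.mul_assoc]
  exact (isStarProjection_mul_transpose hV).frobenius_norm_mul_right_le X

end Projection

section Deriv

variable {m n k : Type*} [Fintype m] [Fintype n] [Fintype k] {s : Set ℝ} {t : ℝ}

theorem HasDerivWithinAt.matrix_mul_const {S : ℝ → Matrix m n ℝ} {S' : Matrix m n ℝ}
    (hS : HasDerivWithinAt S S' s t) (V : Matrix n k ℝ) :
    HasDerivWithinAt (fun τ => S τ * V) (S' * V) s t :=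
  (mulRightLinearMap m ℝ V).toContinuousLinearMap.hasFDerivAt.comp_hasDerivWithinAt t hS

theorem HasDerivWithinAt.const_matrix_mul {S : ℝ → Matrix n k ℝ} {S' : Matrix n k ℝ}
    (U : Matrix m n ℝ) (hS : HasDerivWithinAt S S' s t) :
    HasDerivWithinAt (fun τ => U * S τ) (U * S') s t :=
  (mulLeftLinearMap k ℝ U).toContinuousLinearMap.hasFDerivAt.comp_hasDerivWithinAt t hS

theorem HasDerivWithinAt.matrix_transpose {S : ℝ → Matrix m n ℝ} {S' : Matrix m n ℝ}
    (hS : HasDerivWithinAt S S' s t) : HasDerivWithinAt (fun τ => (S τ)ᵀ) S'ᵀ s t :=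
  (transposeLinearEquiv m n ℝ ℝ).toLinearMap.toContinuousLinearMap.hasFDerivAt
    |>.comp_hasDerivWithinAt t hS

theorem HasDerivWithinAt.const_mul_mul_transpose {U : Matrix m k ℝ} {V : Matrix n k ℝ}
    {S : ℝ → Matrix k k ℝ} {G : Matrix m n ℝ} (hS : HasDerivWithinAt S (Uᵀ * G * V) s t) :
    HasDerivWithinAt (fun τ => U * S τ * Vᵀ) (U * Uᵀ * G * (V * Vᵀ)) s t := by
  simpa only [Matrix.mul_assoc] using (hS.const_matrix_mul U).matrix_mul_const Vᵀ

end Deriv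

section Gronwall

open Real

theorem gronwallBound_zero_le {K ε x : ℝ} (hK : 0 ≤ K) (hε : 0 ≤ ε) :
    gronwallBound 0 K ε x ≤ ε * x * exp (K * x) := by
  rcases hK.eq_or_lt with rfl | hK
  · simp [gronwallBound_K0]
  simp only [gronwallBound_of_K_ne_0 hK.ne', zero_mul, zero_add]
  have h : exp (K * x) - 1 ≤ K * x * exp (K * x) := by
    have h₁ := add_one_le_exp (-(K * x))
    have h₂ : exp (-(K * x)) * exp (K * x) = 1 := by rw [← exp_add]; simp
    nlinarith [exp_pos (K * x)]
  calc ε / K * (exp (K * x) - 1) ≤ ε / K * (K * x * exp (K * x)) := by gcongr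
    _ = ε * x * exp (K * x) := by field_simp

variable {E : Type*} [NormedAddCommGroup E] [NormedSpace ℝ E]

theorem norm_le_of_norm_deriv_le_of_left_eq_zero {f f' : ℝ → E} {K ε a b : ℝ} (hK : 0 ≤ K)
    (hf : ∀ t ∈ Icc a b, HasDerivWithinAt f (f' t) (Icc a b) t)
    (bound : ∀ t ∈ Icc a b, ‖f' t‖ ≤ K * ‖f t‖ + ε) (ha : f a = 0) :
    ∀ t ∈ Icc a b, ‖f t‖ ≤ ε * (b - a) * exp (K * (b - a)) := by
  intro t ht
  have hε : 0 ≤ ε := by simpa [ha] using (norm_nonneg _).trans (bound a ⟨le_rfl, ht.1.trans ht.2⟩)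
  calc ‖f t‖ ≤ gronwallBound 0 K ε (t - a) :=
        norm_le_gronwallBound_of_norm_deriv_right_le (fun x hx => (hf x hx).continuousWithinAt)
          (fun x hx => (hf x (Ico_subset_Icc_self hx)).mono_of_mem_nhdsWithin
            (Icc_mem_nhdsGE_of_mem hx))
          (by simp [ha]) (fun x hx => bound x (Ico_subset_Icc_self hx)) t ht
    _ ≤ gronwallBound 0 K ε (b - a) := gronwallBound_mono le_rfl hε hK (by linarith [ht.2])
    _ ≤ ε * (b - a) * exp (K * (b - a)) := gronwallBound_zero_le hK hε

theorem norm_image_sub_left_le_of_norm_deriv_le {f f' : ℝ → E} {C a τ t : ℝ}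
    (hf : ∀ s ∈ Icc a (a + τ), HasDerivWithinAt f (f' s) (Icc a (a + τ)) s)
    (bound : ∀ s ∈ Icc a (a + τ), ‖f' s‖ ≤ C) (ht : t ∈ Icc a (a + τ)) :
    ‖f t - f a‖ ≤ C * τ :=
  (norm_image_sub_le_of_norm_deriv_le_segment' hf (fun s hs => bound s (Ico_subset_Icc_self hs))
    t ht).trans
    (mul_le_mul_of_nonneg_left (by linarith [ht.2]) ((norm_nonneg _).trans (bound t ht)))

theorem norm_sub_sub_smul_le_of_hasDerivWithinAt {g g' g'' : ℝ → E} {M a b c t : ℝ}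
    (hg : ∀ s ∈ Icc a b, HasDerivWithinAt g (g' s) (Icc a b) s)
    (hg' : ∀ s ∈ Icc a b, HasDerivWithinAt g' (g'' s) (Icc a b) s)
    (hg'' : ∀ s ∈ Icc a b, ‖g'' s‖ ≤ M) (hc : c ∈ Icc a b) (ht : t ∈ Icc a b) :
    ‖g t - g c - (t - c) • g' c‖ ≤ M * (t - c) ^ 2 := by
  have hM : 0 ≤ M := (norm_nonneg _).trans (hg'' c hc)
  have hsub : uIcc c t ⊆ Icc a b := uIcc_subset_Icc hc ht
  have hder : ∀ s ∈ uIcc c t, HasDerivWithinAt (fun s => g s - g c - (s - c) • g' c)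
      (g' s - g' c) (uIcc c t) s := fun s hs => by
    convert (((hg s (hsub hs)).mono hsub).sub_const (g c)).sub
      (((hasDerivWithinAt_id s _).sub_const c).smul_const (g' c)) using 1
    · rfl
    · simp
  have hbound : ∀ s ∈ uIcc c t, ‖g' s - g' c‖ ≤ M * ‖t - c‖ := fun s hs =>
    ((convex_Icc a b).norm_image_sub_le_of_norm_hasDerivWithin_le hg' hg'' hc (hsub hs)).trans
      (by simpa only [Real.norm_eq_abs] using
        mul_le_mul_of_nonneg_left (abs_sub_left_of_mem_uIcc hs) hM)
  have := (convex_uIcc c t).norm_image_sub_le_of_norm_hasDerivWithin_le hder hbound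
    left_mem_uIcc right_mem_uIcc
  simpa [Real.norm_eq_abs, mul_assoc, ← sq] using this

end Gronwall

theorem Matrix.mul_transpose_mul_eq_of_mul_transpose_mul_eq {m k l r : Type*} [Fintype m]
    [Fintype k] [Fintype l] {U : Matrix m k ℝ} {U₁ : Matrix m l ℝ} {U₀ : Matrix m r ℝ}
    (h₁ : U * Uᵀ * U₁ = U₁) (h₀ : U₁ * U₁ᵀ * U₀ = U₀) : U * Uᵀ * U₀ = U₀ := by
  rw [← h₀]
  simp only [← Matrix.mul_assoc, h₁]

section NormalComponent

variable {m n k l r s : Type*} [Fintype m] [Fintype n] [Fintype k] [Fintype l] [Fintype r]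
  [Fintype s]

theorem Matrix.mul_transpose_mul_mul_transpose_eq {U : Matrix m k ℝ} {V : Matrix n l ℝ}
    {U₀ : Matrix m r ℝ} {V₀ : Matrix n s ℝ} (S₀ : Matrix r s ℝ) (hU : U * Uᵀ * U₀ = U₀)
    (hV : V * Vᵀ * V₀ = V₀) : U * (Uᵀ * (U₀ * S₀ * V₀ᵀ) * V) * Vᵀ = U₀ * S₀ * V₀ᵀ := by
  have hV' : V₀ᵀ * (V * Vᵀ) = V₀ᵀ := by
    simpa [transpose_mul, Matrix.mul_assoc] using congrArg transpose hV
  rw [show U * (Uᵀ * (U₀ * S₀ * V₀ᵀ) * V) * Vᵀ = U * Uᵀ * U₀ * S₀ * (V₀ᵀ * (V * Vᵀ)) by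
    simp only [Matrix.mul_assoc], hU, hV']

variable [DecidableEq m] [DecidableEq n]

theorem norm_one_sub_mul_le_of_mul_eq [DecidableEq k] [DecidableEq s] {U : Matrix m k ℝ}
    {U₀ : Matrix m r ℝ} {V₀ : Matrix n s ℝ} (hU : Uᵀ * U = 1) (hV₀ : V₀ᵀ * V₀ = 1)
    (hUU₀ : U * Uᵀ * U₀ = U₀) (Z : Matrix m n ℝ) :
    ‖(1 - U * Uᵀ) * Z‖ ≤ ‖(1 - U * Uᵀ) * (Z * V₀)‖ + ‖(1 - U₀ * U₀ᵀ) * Z * (1 - V₀ * V₀ᵀ)‖ := by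
  have hU₀ : ∀ X : Matrix r n ℝ, U * (Uᵀ * (U₀ * X)) = U₀ * X := fun X => by
    simp only [← Matrix.mul_assoc, hUU₀]
  have h : (1 - U * Uᵀ) * Z = (1 - U * Uᵀ) * (Z * V₀) * V₀ᵀ
      + (1 - U * Uᵀ) * ((1 - U₀ * U₀ᵀ) * Z * (1 - V₀ * V₀ᵀ)) := by
    simp only [Matrix.mul_sub, Matrix.sub_mul, Matrix.mul_one, Matrix.one_mul, Matrix.mul_assoc,
      hU₀]
    abel
  rw [h, ← frobenius_norm_mul_transpose hV₀ ((1 - U * Uᵀ) * (Z * V₀))]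
  exact (norm_add_le _ _).trans (add_le_add le_rfl
    ((isStarProjection_mul_transpose hU).one_sub.frobenius_norm_mul_left_le _))

theorem norm_sub_mul_mul_le_of_mul_eq [DecidableEq k] [DecidableEq l] [DecidableEq r]
    [DecidableEq s] {U : Matrix m k ℝ} {V : Matrix n l ℝ} {U₀ : Matrix m r ℝ}
    {V₀ : Matrix n s ℝ} (hU : Uᵀ * U = 1) (hV : Vᵀ * V = 1) (hU₀ : U₀ᵀ * U₀ = 1)
    (hV₀ : V₀ᵀ * V₀ = 1) (hUU₀ : U * Uᵀ * U₀ = U₀) (hVV₀ : V * Vᵀ * V₀ = V₀)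
    (Z : Matrix m n ℝ) :
    ‖Z - U * Uᵀ * Z * (V * Vᵀ)‖ ≤ ‖(1 - U * Uᵀ) * (Z * V₀)‖ + ‖(1 - V * Vᵀ) * (Zᵀ * U₀)‖
      + 2 * ‖(1 - U₀ * U₀ᵀ) * Z * (1 - V₀ * V₀ᵀ)‖ := by
  have h : Z - U * Uᵀ * Z * (V * Vᵀ) = (1 - U * Uᵀ) * Z + U * Uᵀ * ((1 - V * Vᵀ) * Zᵀ)ᵀ := by
    rw [transpose_mul, (isStarProjection_mul_transpose hV).one_sub.transpose_eq,
      transpose_transpose]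
    simp only [Matrix.mul_sub, Matrix.sub_mul, Matrix.mul_one, Matrix.one_mul, Matrix.mul_assoc]
    abel
  have hleft := norm_one_sub_mul_le_of_mul_eq hU hV₀ hUU₀ Z
  have hright : ‖(1 - V * Vᵀ) * Zᵀ‖ ≤ ‖(1 - V * Vᵀ) * (Zᵀ * U₀)‖
      + ‖(1 - U₀ * U₀ᵀ) * Z * (1 - V₀ * V₀ᵀ)‖ := by
    have := norm_one_sub_mul_le_of_mul_eq hV hU₀ hVV₀ Zᵀ
    rw [← frobenius_norm_transpose ((1 - V₀ * V₀ᵀ) * Zᵀ * _), transpose_mul, transpose_mul,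
      transpose_transpose, (isStarProjection_mul_transpose hU₀).one_sub.transpose_eq,
      (isStarProjection_mul_transpose hV₀).one_sub.transpose_eq] at this
    simpa only [Matrix.mul_assoc] using this
  have hproj := (isStarProjection_mul_transpose hU).frobenius_norm_mul_left_le
    ((1 - V * Vᵀ) * Zᵀ)ᵀ
  rw [frobenius_norm_transpose] at hproj
  rw [h]
  linarith [norm_add_le ((1 - U * Uᵀ) * Z) (U * Uᵀ * ((1 - V * Vᵀ) * Zᵀ)ᵀ)]

theorem norm_sub_mul_mul_le_of_captures [DecidableEq k] [DecidableEq l] [DecidableEq r]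
    [DecidableEq s] {U : Matrix m k ℝ} {V : Matrix n l ℝ} {U₀ : Matrix m r ℝ}
    {V₀ : Matrix n s ℝ} (hU : Uᵀ * U = 1) (hV : Vᵀ * V = 1) (hU₀ : U₀ᵀ * U₀ = 1)
    (hV₀ : V₀ᵀ * V₀ = 1) (hUU₀ : U * Uᵀ * U₀ = U₀) (hVV₀ : V * Vᵀ * V₀ = V₀) {Z : Matrix m n ℝ}
    (hZV₀ : U * Uᵀ * (Z * V₀) = Z * V₀) (hZU₀ : V * Vᵀ * (Zᵀ * U₀) = Zᵀ * U₀) :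
    ‖Z - U * Uᵀ * Z * (V * Vᵀ)‖ ≤ 2 * ‖(1 - U₀ * U₀ᵀ) * Z * (1 - V₀ * V₀ᵀ)‖ := by
  simpa [Matrix.sub_mul, hZV₀, hZU₀] using
    norm_sub_mul_mul_le_of_mul_eq hU hV hU₀ hV₀ hUU₀ hVV₀ Z

end NormalComponent

section ProjectedFlow

open Real

variable {m n r k l : Type*} [Fintype m] [Fintype n] [Fintype r] [Fintype k] [Fintype l]

theorem IsStarProjection.norm_one_sub_mul_le_of_hasDerivWithinAt [DecidableEq m]
    {P : Matrix m m ℝ} (hP : IsStarProjection P) {f f' : ℝ → Matrix m n ℝ} {c : Matrix m n ℝ}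
    {δ a b : ℝ} (hab : a < b) (hf : ∀ t ∈ Icc a b, HasDerivWithinAt f (f' t) (Icc a b) t)
    (hbound : ∀ t ∈ Icc a b, ‖f' t - c‖ ≤ δ) (ha : P * f a = f a) (hb : P * f b = f b) :
    ‖(1 - P) * c‖ ≤ δ := by
  have hg : ∀ t ∈ Icc a b,
      HasDerivWithinAt (fun t => f t - (t - a) • c) (f' t - c) (Icc a b) t := fun t ht => by
    have := (hf t ht).sub (((hasDerivWithinAt_id t _).sub_const a).smul_const c)
    rwa [one_smul] at this
  have hmvt := (convex_Icc a b).norm_image_sub_le_of_norm_hasDerivWithin_le hg hbound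
    ⟨le_rfl, hab.le⟩ ⟨hab.le, le_rfl⟩
  have hproj : (1 - P) * ((f b - (b - a) • c) - (f a - (a - a) • c))
      = -((b - a) • ((1 - P) * c)) := by
    simp [Matrix.mul_sub, Matrix.sub_mul, ha, hb, Matrix.mul_smul]
  have := (hP.one_sub.frobenius_norm_mul_left_le _).trans hmvt
  rw [hproj, norm_neg, norm_smul, Real.norm_eq_abs, abs_of_pos (sub_pos.2 hab), mul_comm] at this
  exact le_of_mul_le_mul_right this (sub_pos.2 hab)

variable [DecidableEq m] [DecidableEq n] {F : ℝ → Matrix m n ℝ → Matrix m n ℝ} {L : ℝ}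

theorem norm_sub_le_of_projected_ode {P : Matrix m m ℝ} {Q : Matrix n n ℝ}
    (hP : IsStarProjection P) (hQ : IsStarProjection Q) (hL : 0 ≤ L)
    (hF : ∀ t Y Z, ‖F t Y - F t Z‖ ≤ L * ‖Y - Z‖) {Y A : ℝ → Matrix m n ℝ} {ε a b : ℝ}
    (hY : ∀ t ∈ Icc a b, HasDerivWithinAt Y (P * F t (Y t) * Q) (Icc a b) t)
    (hA : ∀ t ∈ Icc a b, HasDerivWithinAt A (F t (A t)) (Icc a b) t)
    (hdefect : ∀ t ∈ Icc a b, ‖F t (A t) - P * F t (A t) * Q‖ ≤ ε) (h₀ : Y a = A a) :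
    ∀ t ∈ Icc a b, ‖Y t - A t‖ ≤ ε * (b - a) * exp (L * (b - a)) := by
  refine norm_le_of_norm_deriv_le_of_left_eq_zero hL (fun t ht => (hY t ht).sub (hA t ht))
    (fun t ht => ?_) (sub_eq_zero.mpr h₀)
  have h : P * F t (Y t) * Q - F t (A t)
      = P * (F t (Y t) - F t (A t)) * Q - (F t (A t) - P * F t (A t) * Q) := by
    simp only [Matrix.mul_sub, Matrix.sub_mul]
    abel
  rw [h]
  exact (norm_sub_le _ _).trans
    (add_le_add ((hP.frobenius_norm_mul_mul_le hQ _).trans (hF _ _ _)) (hdefect t ht))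

theorem norm_one_sub_mul_le_of_kStep [DecidableEq r] {B M₂ a τ : ℝ} (hL : 0 ≤ L) (hτ : 0 < τ)
    (hF : ∀ t Y Z, ‖F t Y - F t Z‖ ≤ L * ‖Y - Z‖) {A A₂ : ℝ → Matrix m n ℝ}
    (hA : ∀ t ∈ Icc a (a + τ), HasDerivWithinAt A (F t (A t)) (Icc a (a + τ)) t)
    (hFA : ∀ t ∈ Icc a (a + τ), ‖F t (A t)‖ ≤ B)
    (hA₂ : ∀ t ∈ Icc a (a + τ),
      HasDerivWithinAt (fun s => F s (A s)) (A₂ t) (Icc a (a + τ)) t)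
    (hA₂b : ∀ t ∈ Icc a (a + τ), ‖A₂ t‖ ≤ M₂) {V : Matrix n r ℝ} (hV : Vᵀ * V = 1)
    {K : ℝ → Matrix m r ℝ}
    (hK : ∀ t ∈ Icc a (a + τ), HasDerivWithinAt K (F t (K t * Vᵀ) * V) (Icc a (a + τ)) t)
    (hK₀ : K a * Vᵀ = A a) {P : Matrix m m ℝ} (hP : IsStarProjection P)
    (hPa : P * K a = K a) (hPb : P * K (a + τ) = K (a + τ)) :
    ‖(1 - P) * (F a (A a) * V)‖ ≤ (L * B * exp (L * τ) + M₂) * τ := by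
  have hQ := isStarProjection_mul_transpose hV
  have hdefect : ∀ t ∈ Icc a (a + τ),
      ‖F t (A t) - (1 : Matrix m m ℝ) * F t (A t) * (V * Vᵀ)‖ ≤ B := fun t ht => by
    rw [Matrix.one_mul, ← Matrix.mul_one (F t (A t)), Matrix.mul_assoc, Matrix.one_mul,
      ← Matrix.mul_sub]
    exact (hQ.one_sub.frobenius_norm_mul_right_le _).trans (hFA t ht)
  have herr := norm_sub_le_of_projected_ode (IsStarProjection.one _) hQ hL hF
    (Y := fun t => K t * Vᵀ) (fun t ht => by
      simpa only [Matrix.one_mul, Matrix.mul_assoc] using (hK t ht).matrix_mul_const Vᵀ)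
    hA hdefect hK₀
  simp only [add_sub_cancel_left] at herr
  refine hP.norm_one_sub_mul_le_of_hasDerivWithinAt (by linarith) hK (fun t ht => ?_) hPa hPb
  calc ‖F t (K t * Vᵀ) * V - F a (A a) * V‖ = ‖(F t (K t * Vᵀ) - F a (A a)) * V‖ := by
        rw [Matrix.sub_mul]
    _ ≤ ‖F t (K t * Vᵀ) - F t (A t)‖ + ‖F t (A t) - F a (A a)‖ :=
        (frobenius_norm_mul_le_of_transpose_mul_self hV _).trans
          (norm_sub_le_norm_sub_add_norm_sub _ _ _)
    _ ≤ L * (B * τ * exp (L * τ)) + M₂ * τ :=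
        add_le_add ((hF _ _ _).trans (by gcongr; exact herr t ht))
          (norm_image_sub_left_le_of_norm_deriv_le hA₂ hA₂b ht)
    _ = (L * B * exp (L * τ) + M₂) * τ := by ring

theorem norm_one_sub_mul_le_of_lStep [DecidableEq r] {B M₂ a τ : ℝ} (hL : 0 ≤ L) (hτ : 0 < τ)
    (hF : ∀ t Y Z, ‖F t Y - F t Z‖ ≤ L * ‖Y - Z‖) {A A₂ : ℝ → Matrix m n ℝ}
    (hA : ∀ t ∈ Icc a (a + τ), HasDerivWithinAt A (F t (A t)) (Icc a (a + τ)) t)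
    (hFA : ∀ t ∈ Icc a (a + τ), ‖F t (A t)‖ ≤ B)
    (hA₂ : ∀ t ∈ Icc a (a + τ),
      HasDerivWithinAt (fun s => F s (A s)) (A₂ t) (Icc a (a + τ)) t)
    (hA₂b : ∀ t ∈ Icc a (a + τ), ‖A₂ t‖ ≤ M₂) {U : Matrix m r ℝ} (hU : Uᵀ * U = 1)
    {Lm : ℝ → Matrix n r ℝ}
    (hLm : ∀ t ∈ Icc a (a + τ),
      HasDerivWithinAt Lm ((F t (U * (Lm t)ᵀ))ᵀ * U) (Icc a (a + τ)) t)
    (hLm₀ : U * (Lm a)ᵀ = A a) {P : Matrix n n ℝ} (hP : IsStarProjection P)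
    (hPa : P * Lm a = Lm a) (hPb : P * Lm (a + τ) = Lm (a + τ)) :
    ‖(1 - P) * ((F a (A a))ᵀ * U)‖ ≤ (L * B * exp (L * τ) + M₂) * τ :=
  -- the L-step is the K-step of the transposed problem
  norm_one_sub_mul_le_of_kStep (F := fun t Z => (F t Zᵀ)ᵀ) (A := fun t => (A t)ᵀ)
    (A₂ := fun t => (A₂ t)ᵀ) hL hτ
    (fun t Y Z => by simpa [← transpose_sub, frobenius_norm_transpose] using hF t Yᵀ Zᵀ)
    (fun t ht => (hA t ht).matrix_transpose)
    (fun t ht => by simpa [frobenius_norm_transpose] using hFA t ht)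
    (fun t ht => (hA₂ t ht).matrix_transpose)
    (fun t ht => by simpa [frobenius_norm_transpose] using hA₂b t ht)
    hU (fun t ht => by simpa [transpose_mul] using hLm t ht)
    (by rw [← hLm₀, transpose_mul, transpose_transpose]) hP hPa hPb

theorem norm_sub_le_of_augmented_bug_step [DecidableEq r] [DecidableEq k] {B M₂ εr a τ : ℝ}
    (hL : 0 ≤ L) (hτ : 0 < τ) (hF : ∀ t Y Z, ‖F t Y - F t Z‖ ≤ L * ‖Y - Z‖)
    {A A₂ : ℝ → Matrix m n ℝ}
    (hA : ∀ t ∈ Icc a (a + τ), HasDerivWithinAt A (F t (A t)) (Icc a (a + τ)) t)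
    (hFA : ∀ t ∈ Icc a (a + τ), ‖F t (A t)‖ ≤ B)
    (hA₂ : ∀ t ∈ Icc a (a + τ),
      HasDerivWithinAt (fun s => F s (A s)) (A₂ t) (Icc a (a + τ)) t)
    (hA₂b : ∀ t ∈ Icc a (a + τ), ‖A₂ t‖ ≤ M₂)
    {U₀ : Matrix m r ℝ} {V₀ : Matrix n r ℝ} {S₀ : Matrix r r ℝ} (hU₀ : U₀ᵀ * U₀ = 1)
    (hV₀ : V₀ᵀ * V₀ = 1) (hA₀ : A a = U₀ * S₀ * V₀ᵀ)
    (hεr : ‖(1 - U₀ * U₀ᵀ) * F a (A a) * (1 - V₀ * V₀ᵀ)‖ ≤ εr)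
    {K : ℝ → Matrix m r ℝ} {Lm : ℝ → Matrix n r ℝ}
    (hK : ∀ t ∈ Icc a (a + τ), HasDerivWithinAt K (F t (K t * V₀ᵀ) * V₀) (Icc a (a + τ)) t)
    (hK₀ : K a = U₀ * S₀)
    (hLm : ∀ t ∈ Icc a (a + τ),
      HasDerivWithinAt Lm ((F t (U₀ * (Lm t)ᵀ))ᵀ * U₀) (Icc a (a + τ)) t)
    (hLm₀ : Lm a = V₀ * S₀ᵀ) {U : Matrix m k ℝ} {V : Matrix n k ℝ} (hU : Uᵀ * U = 1)
    (hV : Vᵀ * V = 1) (hUU₀ : U * Uᵀ * U₀ = U₀) (hUK : U * Uᵀ * K (a + τ) = K (a + τ))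
    (hVV₀ : V * Vᵀ * V₀ = V₀) (hVLm : V * Vᵀ * Lm (a + τ) = Lm (a + τ))
    {S : ℝ → Matrix k k ℝ}
    (hS : ∀ t ∈ Icc a (a + τ),
      HasDerivWithinAt S (Uᵀ * F t (U * S t * Vᵀ) * V) (Icc a (a + τ)) t)
    (hS₀ : S a = Uᵀ * A a * V) :
    ‖U * S (a + τ) * Vᵀ - A (a + τ)‖
      ≤ 2 * ((L * B * exp (L * τ) + 2 * M₂) * τ + εr) * τ * exp (L * τ) := by
  have hP := isStarProjection_mul_transpose hU
  have hQ := isStarProjection_mul_transpose hV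
  have hcapU := norm_one_sub_mul_le_of_kStep hL hτ hF hA hFA hA₂ hA₂b hV₀ hK
    (by rw [hK₀, hA₀]) hP (by rw [hK₀, ← Matrix.mul_assoc, hUU₀]) hUK
  have hcapV := norm_one_sub_mul_le_of_lStep hL hτ hF hA hFA hA₂ hA₂b hU₀ hLm
    (by rw [hLm₀, transpose_mul, transpose_transpose, ← Matrix.mul_assoc, hA₀]) hQ
    (by rw [hLm₀, ← Matrix.mul_assoc, hVV₀]) hVLm
  have hsplit := norm_sub_mul_mul_le_of_mul_eq hU hV hU₀ hV₀ hUU₀ hVV₀ (F a (A a))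
  have hdefect : ∀ t ∈ Icc a (a + τ), ‖F t (A t) - U * Uᵀ * F t (A t) * (V * Vᵀ)‖
      ≤ 2 * ((L * B * exp (L * τ) + 2 * M₂) * τ + εr) := fun t ht => by
    linarith [hP.frobenius_norm_sub_mul_mul_le hQ (F t (A t)) (F a (A a)),
      norm_image_sub_left_le_of_norm_deriv_le hA₂ hA₂b ht]
  have := norm_sub_le_of_projected_ode hP hQ hL hF (Y := fun t => U * S t * Vᵀ)
    (fun t ht => (hS t ht).const_mul_mul_transpose) hA hdefect
    (by simp only [hS₀, hA₀, mul_transpose_mul_mul_transpose_eq S₀ hUU₀ hVV₀])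
    (a + τ) ⟨by linarith, le_rfl⟩
  simpa only [add_sub_cancel_left, mul_assoc] using this

theorem norm_sub_le_of_projected_ode_midpoint {P : Matrix m m ℝ} {Q : Matrix n n ℝ}
    (hP : IsStarProjection P) (hQ : IsStarProjection Q) (hL : 0 ≤ L)
    (hF : ∀ t Y Z, ‖F t Y - F t Z‖ ≤ L * ‖Y - Z‖) {Y A A₂ A₃ : ℝ → Matrix m n ℝ}
    {M₂ M₃ δ a h : ℝ} (hh : 0 ≤ h)
    (hY : ∀ t ∈ Icc a (a + h), HasDerivWithinAt Y (P * F t (Y t) * Q) (Icc a (a + h)) t)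
    (hA : ∀ t ∈ Icc a (a + h), HasDerivWithinAt A (F t (A t)) (Icc a (a + h)) t)
    (hA₂ : ∀ t ∈ Icc a (a + h),
      HasDerivWithinAt (fun s => F s (A s)) (A₂ t) (Icc a (a + h)) t)
    (hA₃ : ∀ t ∈ Icc a (a + h), HasDerivWithinAt A₂ (A₃ t) (Icc a (a + h)) t)
    (hA₂b : ‖A₂ (a + h / 2)‖ ≤ M₂) (hA₃b : ∀ t ∈ Icc a (a + h), ‖A₃ t‖ ≤ M₃)
    (hdefect : ‖F (a + h / 2) (A (a + h / 2))
      - P * F (a + h / 2) (A (a + h / 2)) * Q‖ ≤ δ) (h₀ : Y a = A a) :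
    ‖Y (a + h) - A (a + h)‖ ≤ (L * M₂ * h ^ 2 / 4 + δ + M₃ * h ^ 2 / 2) * h * exp (L * h) := by
  set c := a + h / 2 with hc_def
  have hc : c ∈ Icc a (a + h) := ⟨by linarith, by linarith⟩
  have hdist : ∀ t ∈ Icc a (a + h), (t - c) ^ 2 ≤ h ^ 2 / 4 := fun t ht => by
    have h₁ : t - c ≤ h / 2 := by linarith [ht.2]
    have h₂ : 0 ≤ t - c + h / 2 := by linarith [ht.1]
    nlinarith [mul_nonneg (sub_nonneg.2 h₁) h₂]
  set D := A₂ c - P * A₂ c * Q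
  have hD : ‖D‖ ≤ 2 * M₂ := by linarith [hP.frobenius_norm_sub_mul_mul_le_two_mul hQ (A₂ c)]
  -- `ψ` vanishes at `a` and `a + h` and `ψ' = t - c`, so `ψ • D` cancels the part of the
  -- defect that is linear in `t - c`.
  let ψ : ℝ → ℝ := fun t => (t - c) ^ 2 / 2 - h ^ 2 / 8
  have hψ : ∀ t ∈ Icc a (a + h), |ψ t| ≤ h ^ 2 / 8 := fun t ht => by
    simp only [ψ, abs_le]
    constructor <;> nlinarith [hdist t ht, sq_nonneg (t - c)]
  have hψ' : ∀ t, HasDerivWithinAt ψ (t - c) (Icc a (a + h)) t := fun t => by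
    have := ((((hasDerivAt_id t).sub_const c).pow 2).div_const 2).sub_const (h ^ 2 / 8)
    exact (this.congr_deriv (by norm_num)).hasDerivWithinAt
  let w : ℝ → Matrix m n ℝ := fun t => Y t - A t + ψ t • D
  have hw : ∀ t ∈ Icc a (a + h), HasDerivWithinAt w
      (P * F t (Y t) * Q - F t (A t) + (t - c) • D) (Icc a (a + h)) t := fun t ht =>
    ((hY t ht).sub (hA t ht)).add ((hψ' t).smul_const D)
  have hbound : ∀ t ∈ Icc a (a + h), ‖P * F t (Y t) * Q - F t (A t) + (t - c) • D‖
      ≤ L * ‖w t‖ + (L * M₂ * h ^ 2 / 4 + δ + M₃ * h ^ 2 / 2) := fun t ht => by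
    set R := F t (A t) - F c (A c) - (t - c) • A₂ c
    have hR : ‖R‖ ≤ M₃ * h ^ 2 / 4 := by
      have := norm_sub_sub_smul_le_of_hasDerivWithinAt hA₂ hA₃ hA₃b hc ht
      nlinarith [hdist t ht, (norm_nonneg _).trans (hA₃b t ht)]
    have hYA : ‖Y t - A t‖ ≤ ‖w t‖ + M₂ * h ^ 2 / 4 := by
      have : Y t - A t = w t - ψ t • D := by simp [w]
      rw [this]
      refine (norm_sub_le _ _).trans (add_le_add le_rfl ?_)
      rw [norm_smul, Real.norm_eq_abs]
      nlinarith [hψ t ht, abs_nonneg (ψ t), norm_nonneg D]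
    have hsplit : P * F t (Y t) * Q - F t (A t) + (t - c) • D
        = P * (F t (Y t) - F t (A t)) * Q - (F c (A c) - P * F c (A c) * Q)
          - (R - P * R * Q) := by
      simp only [R, D, Matrix.mul_sub, Matrix.sub_mul, Matrix.mul_smul, Matrix.smul_mul,
        smul_sub]
      abel
    rw [hsplit]
    refine (norm_sub_le _ _).trans (add_le_add ((norm_sub_le _ _).trans (add_le_add
      ((hP.frobenius_norm_mul_mul_le hQ _).trans (hF _ _ _)) hdefect))
      (hP.frobenius_norm_sub_mul_mul_le_two_mul hQ R)) |>.trans ?_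
    nlinarith [mul_le_mul_of_nonneg_left hYA hL]
  have hψa : ψ a = 0 := by simp only [ψ, hc_def]; ring
  have hψb : ψ (a + h) = 0 := by simp only [ψ, hc_def]; ring
  have hw₀ : w a = 0 := by simp [w, h₀, hψa]
  have hwh : w (a + h) = Y (a + h) - A (a + h) := by simp [w, hψb]
  have := norm_le_of_norm_deriv_le_of_left_eq_zero hL hw hbound hw₀ (a + h) ⟨by linarith, le_rfl⟩
  rwa [hwh, add_sub_cancel_left] at this

theorem norm_sub_le_of_midpoint_galerkin_step [DecidableEq k] [DecidableEq l]
    {M₂ M₃ ε η a h : ℝ} (hL : 0 ≤ L) (hF : ∀ t Y Z, ‖F t Y - F t Z‖ ≤ L * ‖Y - Z‖) (hh : 0 ≤ h)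
    {A A₂ A₃ : ℝ → Matrix m n ℝ}
    (hA : ∀ t ∈ Icc a (a + h), HasDerivWithinAt A (F t (A t)) (Icc a (a + h)) t)
    (hA₂ : ∀ t ∈ Icc a (a + h),
      HasDerivWithinAt (fun s => F s (A s)) (A₂ t) (Icc a (a + h)) t)
    (hA₃ : ∀ t ∈ Icc a (a + h), HasDerivWithinAt A₂ (A₃ t) (Icc a (a + h)) t)
    (hA₂b : ‖A₂ (a + h / 2)‖ ≤ M₂) (hA₃b : ∀ t ∈ Icc a (a + h), ‖A₃ t‖ ≤ M₃)
    {Uh : Matrix m k ℝ} {Vh : Matrix n k ℝ} {U : Matrix m l ℝ} {V : Matrix n l ℝ}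
    (hUh : Uhᵀ * Uh = 1) (hVh : Vhᵀ * Vh = 1) (hU : Uᵀ * U = 1) (hV : Vᵀ * V = 1)
    (hUUh : U * Uᵀ * Uh = Uh) (hVVh : V * Vᵀ * Vh = Vh) {Yh : Matrix m n ℝ}
    (hUF : U * Uᵀ * (F (a + h / 2) Yh * Vh) = F (a + h / 2) Yh * Vh)
    (hVF : V * Vᵀ * ((F (a + h / 2) Yh)ᵀ * Uh) = (F (a + h / 2) Yh)ᵀ * Uh)
    (hN : ‖(1 - Uh * Uhᵀ) * F (a + h / 2) Yh * (1 - Vh * Vhᵀ)‖ ≤ ε)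
    (hYh : ‖Yh - A (a + h / 2)‖ ≤ η) {S : ℝ → Matrix l l ℝ}
    (hS : ∀ t ∈ Icc a (a + h),
      HasDerivWithinAt S (Uᵀ * F t (U * S t * Vᵀ) * V) (Icc a (a + h)) t)
    (h₀ : U * S a * Vᵀ = A a) :
    ‖U * S (a + h) * Vᵀ - A (a + h)‖
      ≤ (L * M₂ * h ^ 2 / 4 + (2 * ε + 2 * (L * η)) + M₃ * h ^ 2 / 2) * h * exp (L * h) := by
  have hP := isStarProjection_mul_transpose hU
  have hQ := isStarProjection_mul_transpose hV
  refine norm_sub_le_of_projected_ode_midpoint hP hQ hL hF hh (Y := fun t => U * S t * Vᵀ)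
    (fun t ht => (hS t ht).const_mul_mul_transpose) hA hA₂ hA₃ hA₂b hA₃b ?_ h₀
  have hlip := hF (a + h / 2) (A (a + h / 2)) Yh
  rw [norm_sub_rev (A _)] at hlip
  linarith [hP.frobenius_norm_sub_mul_mul_le hQ (F (a + h / 2) (A (a + h / 2))) (F (a + h / 2) Yh),
    norm_sub_mul_mul_le_of_captures hU hV hUh hVh hUUh hVVh hUF hVF,
    mul_le_mul_of_nonneg_left hYh hL]

end ProjectedFlow

theorem midpoint_bug_local_error_general (m n r rh q : ℕ) (L B M₂ M₃ hmax : ℝ)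
    (hL : 0 < L) (hB : 0 < B) (hM₂ : 0 < M₂) (hM₃ : 0 < M₃) :
    ∃ C > 0,
      ∀ (F : ℝ → Matrix (Fin m) (Fin n) ℝ → Matrix (Fin m) (Fin n) ℝ)
        (t₀ h εr εrh : ℝ)
        (A A₂ A₃ : ℝ → Matrix (Fin m) (Fin n) ℝ)
        (U₀ : Matrix (Fin m) (Fin r) ℝ) (V₀ : Matrix (Fin n) (Fin r) ℝ)
        (S₀ : Matrix (Fin r) (Fin r) ℝ) (Y₀ : Matrix (Fin m) (Fin n) ℝ)
        (K : ℝ → Matrix (Fin m) (Fin r) ℝ) (Lm : ℝ → Matrix (Fin n) (Fin r) ℝ)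
        (Uhat : Matrix (Fin m) (Fin rh) ℝ) (Vhat : Matrix (Fin n) (Fin rh) ℝ)
        (Shat : ℝ → Matrix (Fin rh) (Fin rh) ℝ) (Yhalf : Matrix (Fin m) (Fin n) ℝ)
        (Ubar : Matrix (Fin m) (Fin q) ℝ) (Vbar : Matrix (Fin n) (Fin q) ℝ)
        (Sbar : ℝ → Matrix (Fin q) (Fin q) ℝ) (Ybar₁ : Matrix (Fin m) (Fin n) ℝ),
        -- F continuous, Lipschitz and bounded
        (Continuous fun z : ℝ × Matrix (Fin m) (Fin n) ℝ => F z.1 z.2) →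
        (∀ (t : ℝ) (Y Z : Matrix (Fin m) (Fin n) ℝ), ‖F t Y - F t Z‖ ≤ L * ‖Y - Z‖) →
        (∀ (t : ℝ) (Y : Matrix (Fin m) (Fin n) ℝ), ‖F t Y‖ ≤ B) →
        -- stepsize
        0 < h → h ≤ hmax →
        -- exact solution, three times continuously differentiable
        (∀ t ∈ Icc t₀ (t₀ + h), HasDerivWithinAt A (F t (A t)) (Icc t₀ (t₀ + h)) t) →
        (∀ t ∈ Icc t₀ (t₀ + h),
          HasDerivWithinAt (fun s => F s (A s)) (A₂ t) (Icc t₀ (t₀ + h)) t) →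
        (∀ t ∈ Icc t₀ (t₀ + h), HasDerivWithinAt A₂ (A₃ t) (Icc t₀ (t₀ + h)) t) →
        ContinuousOn A₃ (Icc t₀ (t₀ + h)) →
        (∀ t ∈ Icc t₀ (t₀ + h), ‖A₂ t‖ ≤ M₂) →
        (∀ t ∈ Icc t₀ (t₀ + h), ‖A₃ t‖ ≤ M₃) →
        -- initial value of rank r
        U₀ᵀ * U₀ = 1 → V₀ᵀ * V₀ = 1 → Y₀ = U₀ * S₀ * V₀ᵀ → A t₀ = Y₀ →
        -- normal-component bounds for rank r and rank r̂
        (∀ t ∈ Icc t₀ (t₀ + h), ∀ (U : Matrix (Fin m) (Fin r) ℝ)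
          (V : Matrix (Fin n) (Fin r) ℝ) (S : Matrix (Fin r) (Fin r) ℝ),
          Uᵀ * U = 1 → Vᵀ * V = 1 →
          ‖(1 - U * Uᵀ) * F t (U * S * Vᵀ) * (1 - V * Vᵀ)‖ ≤ εr) →
        (∀ t ∈ Icc t₀ (t₀ + h), ∀ (U : Matrix (Fin m) (Fin rh) ℝ)
          (V : Matrix (Fin n) (Fin rh) ℝ) (S : Matrix (Fin rh) (Fin rh) ℝ),
          Uᵀ * U = 1 → Vᵀ * V = 1 →
          ‖(1 - U * Uᵀ) * F t (U * S * Vᵀ) * (1 - V * Vᵀ)‖ ≤ εrh) →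
        -- K-step and L-step of the augmented BUG half-step
        (∀ t ∈ Icc t₀ (t₀ + h / 2),
          HasDerivWithinAt K (F t (K t * V₀ᵀ) * V₀) (Icc t₀ (t₀ + h / 2)) t) →
        K t₀ = U₀ * S₀ →
        (∀ t ∈ Icc t₀ (t₀ + h / 2),
          HasDerivWithinAt Lm ((F t (U₀ * (Lm t)ᵀ))ᵀ * U₀) (Icc t₀ (t₀ + h / 2)) t) →
        Lm t₀ = V₀ * S₀ᵀ →
        -- augmented orthonormal bases of the half-step
        Uhatᵀ * Uhat = 1 → Vhatᵀ * Vhat = 1 →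
        Uhat * Uhatᵀ * U₀ = U₀ → Uhat * Uhatᵀ * K (t₀ + h / 2) = K (t₀ + h / 2) →
        Vhat * Vhatᵀ * V₀ = V₀ → Vhat * Vhatᵀ * Lm (t₀ + h / 2) = Lm (t₀ + h / 2) →
        -- Galerkin S-step of the half-step
        (∀ t ∈ Icc t₀ (t₀ + h / 2),
          HasDerivWithinAt Shat (Uhatᵀ * F t (Uhat * Shat t * Vhatᵀ) * Vhat)
            (Icc t₀ (t₀ + h / 2)) t) →
        Shat t₀ = Uhatᵀ * Y₀ * Vhat →
        Yhalf = Uhat * Shat (t₀ + h / 2) * Vhatᵀ →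
        -- augmented orthonormal bases of the Galerkin step
        Ubarᵀ * Ubar = 1 → Vbarᵀ * Vbar = 1 →
        Ubar * Ubarᵀ * Uhat = Uhat →
        Ubar * Ubarᵀ * (F (t₀ + h / 2) Yhalf * Vhat) = F (t₀ + h / 2) Yhalf * Vhat →
        Vbar * Vbarᵀ * Vhat = Vhat →
        Vbar * Vbarᵀ * ((F (t₀ + h / 2) Yhalf)ᵀ * Uhat) = (F (t₀ + h / 2) Yhalf)ᵀ * Uhat →
        -- Galerkin step over the full step
        (∀ t ∈ Icc t₀ (t₀ + h),
          HasDerivWithinAt Sbar (Ubarᵀ * F t (Ubar * Sbar t * Vbarᵀ) * Vbar)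
            (Icc t₀ (t₀ + h)) t) →
        Sbar t₀ = Ubarᵀ * Y₀ * Vbar →
        Ybar₁ = Ubar * Sbar (t₀ + h) * Vbarᵀ →
        ‖Ybar₁ - A (t₀ + h)‖ ≤ C * h * (h ^ 2 + h * εr + εrh) := by
  set E := Real.exp (L * hmax)
  have hE : ∀ τ ≤ hmax, Real.exp (L * τ) ≤ E := fun τ hτ =>
    Real.exp_le_exp.mpr (mul_le_mul_of_nonneg_left hτ hL.le)
  refine ⟨E * (L * M₂ + L * E * (L * B * E + 2 * M₂) + M₃ + 2 * L * E + 2), by positivity, ?_⟩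
  intro F t₀ h εr εrh A A₂ A₃ U₀ V₀ S₀ Y₀ K Lm Uhat Vhat Shat Yhalf Ubar Vbar Sbar Ybar₁
    _ hF hFB hh hh_le hA hA₂ hA₃ _ hA₂b hA₃b hU₀ hV₀ hY₀ hAY₀ hNr hNrh hK hK₀ hLm hLm₀
    hUh hVh hUhU₀ hUhK hVhV₀ hVhLm hSh hSh₀ hYhalf hUb hVb hUbUh hUbF hVbVh hVbF hSb hSb₀ hYb
  have hsub : Icc t₀ (t₀ + h / 2) ⊆ Icc t₀ (t₀ + h) := Icc_subset_Icc_right (by linarith)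
  have hmid : t₀ + h / 2 ∈ Icc t₀ (t₀ + h) := ⟨by linarith, by linarith⟩
  have hA₀ : A t₀ = U₀ * S₀ * V₀ᵀ := hAY₀.trans hY₀
  have hεr := hNr t₀ ⟨le_rfl, by linarith⟩ U₀ V₀ S₀ hU₀ hV₀
  rw [← hA₀] at hεr
  have hhalf := norm_sub_le_of_augmented_bug_step hL.le (half_pos hh) hF
    (fun t ht => (hA t (hsub ht)).mono hsub) (fun t _ => hFB t _)
    (fun t ht => (hA₂ t (hsub ht)).mono hsub) (fun t ht => hA₂b t (hsub ht)) hU₀ hV₀ hA₀ hεr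
    hK hK₀ hLm hLm₀ hUh hVh hUhU₀ hUhK hVhV₀ hVhLm hSh (by rw [hSh₀, hAY₀])
  have hN := hNrh _ hmid Uhat Vhat (Shat (t₀ + h / 2)) hUh hVh
  rw [← hYhalf] at hhalf hN
  have hfin := norm_sub_le_of_midpoint_galerkin_step hL.le hF hh.le hA hA₂ hA₃ (hA₂b _ hmid)
    hA₃b hUh hVh hUb hVb hUbUh hVbVh hUbF hVbF hN hhalf hSb
    (by rw [hSb₀, hY₀, hA₀, mul_transpose_mul_mul_transpose_eq S₀
      (mul_transpose_mul_eq_of_mul_transpose_mul_eq hUbUh hUhU₀)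
      (mul_transpose_mul_eq_of_mul_transpose_mul_eq hVbVh hVhV₀)])
  rw [hYb]
  refine hfin.trans ?_
  have hεr₀ : 0 ≤ εr := (norm_nonneg _).trans hεr
  have hεrh₀ : 0 ≤ εrh := (norm_nonneg _).trans hN
  have hEh := hE (h / 2) (by linarith)
  -- `C h (h² + h εr + εrh)` exceeds the bound below by `h E` times this sum
  have hsum : 0 ≤ L * M₂ * (3 * h ^ 2 / 4 + h * εr + εrh)
      + L * E * (L * B * E + 2 * M₂) * (h * εr + εrh) + M₃ * (h ^ 2 / 2 + h * εr + εrh)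
      + 2 * L * E * (h ^ 2 + εrh) + 2 * (h ^ 2 + h * εr) := by
    positivity
  calc _ ≤ (L * M₂ * h ^ 2 / 4 + (2 * εrh
          + 2 * (L * (2 * ((L * B * E + 2 * M₂) * (h / 2) + εr) * (h / 2) * E)))
        + M₃ * h ^ 2 / 2) * h * E := by gcongr; exact hE h hh_le
    _ ≤ _ := by nlinarith [mul_nonneg (mul_nonneg hsum hh.le) (Real.exp_pos (L * hmax)).le]

/-- Local error bound for the midpoint BUG integrator: there is a constant `C`, depending
only on `L`, `B`, `M₂`, `M₃` and `h_max`, such that for every admissible setup (Lipschitz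
and bounded `F`, exact solution `A` with bounded second and third derivatives, normal
components of the vector field bounded by `ε_r` on rank-`r` manifolds and by `ε_r̂` on
rank-`r̂` manifolds, augmented BUG half-step producing `Ŷ_{1/2}`, and Galerkin step in the
augmented bases producing `Ȳ₁`) one has `‖Ȳ₁ − A(t₁)‖ ≤ C h (h² + h ε_r + ε_r̂)`. -/
theorem midpoint_bug_local_error (m n r rh q : ℕ) (L B M₂ M₃ hmax : ℝ)
    (hL : 0 < L) (hB : 0 < B) (hM₂ : 0 < M₂) (hM₃ : 0 < M₃) (hhmax : 0 < hmax) :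
    ∃ C > 0,
      ∀ (F : ℝ → Matrix (Fin m) (Fin n) ℝ → Matrix (Fin m) (Fin n) ℝ)
        (t₀ h εr εrh : ℝ)
        (A A₂ A₃ : ℝ → Matrix (Fin m) (Fin n) ℝ)
        (U₀ : Matrix (Fin m) (Fin r) ℝ) (V₀ : Matrix (Fin n) (Fin r) ℝ)
        (S₀ : Matrix (Fin r) (Fin r) ℝ) (Y₀ : Matrix (Fin m) (Fin n) ℝ)
        (K : ℝ → Matrix (Fin m) (Fin r) ℝ) (Lm : ℝ → Matrix (Fin n) (Fin r) ℝ)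
        (Uhat : Matrix (Fin m) (Fin rh) ℝ) (Vhat : Matrix (Fin n) (Fin rh) ℝ)
        (Shat : ℝ → Matrix (Fin rh) (Fin rh) ℝ) (Yhalf : Matrix (Fin m) (Fin n) ℝ)
        (Ubar : Matrix (Fin m) (Fin q) ℝ) (Vbar : Matrix (Fin n) (Fin q) ℝ)
        (Sbar : ℝ → Matrix (Fin q) (Fin q) ℝ) (Ybar₁ : Matrix (Fin m) (Fin n) ℝ),
        -- F continuous, Lipschitz and bounded
        (Continuous fun z : ℝ × Matrix (Fin m) (Fin n) ℝ => F z.1 z.2) →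
        (∀ (t : ℝ) (Y Z : Matrix (Fin m) (Fin n) ℝ), ‖F t Y - F t Z‖ ≤ L * ‖Y - Z‖) →
        (∀ (t : ℝ) (Y : Matrix (Fin m) (Fin n) ℝ), ‖F t Y‖ ≤ B) →
        -- stepsize
        0 < h → h ≤ hmax →
        -- exact solution, three times continuously differentiable
        (∀ t ∈ Icc t₀ (t₀ + h), HasDerivWithinAt A (F t (A t)) (Icc t₀ (t₀ + h)) t) →
        (∀ t ∈ Icc t₀ (t₀ + h),
          HasDerivWithinAt (fun s => F s (A s)) (A₂ t) (Icc t₀ (t₀ + h)) t) →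
        (∀ t ∈ Icc t₀ (t₀ + h), HasDerivWithinAt A₂ (A₃ t) (Icc t₀ (t₀ + h)) t) →
        ContinuousOn A₃ (Icc t₀ (t₀ + h)) →
        (∀ t ∈ Icc t₀ (t₀ + h), ‖A₂ t‖ ≤ M₂) →
        (∀ t ∈ Icc t₀ (t₀ + h), ‖A₃ t‖ ≤ M₃) →
        -- initial value of rank r
        U₀ᵀ * U₀ = 1 → V₀ᵀ * V₀ = 1 → Y₀ = U₀ * S₀ * V₀ᵀ → A t₀ = Y₀ →
        -- normal-component bounds for rank r and rank r̂
        (∀ t ∈ Icc t₀ (t₀ + h), ∀ (U : Matrix (Fin m) (Fin r) ℝ)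
          (V : Matrix (Fin n) (Fin r) ℝ) (S : Matrix (Fin r) (Fin r) ℝ),
          Uᵀ * U = 1 → Vᵀ * V = 1 →
          ‖(1 - U * Uᵀ) * F t (U * S * Vᵀ) * (1 - V * Vᵀ)‖ ≤ εr) →
        (∀ t ∈ Icc t₀ (t₀ + h), ∀ (U : Matrix (Fin m) (Fin rh) ℝ)
          (V : Matrix (Fin n) (Fin rh) ℝ) (S : Matrix (Fin rh) (Fin rh) ℝ),
          Uᵀ * U = 1 → Vᵀ * V = 1 →
          ‖(1 - U * Uᵀ) * F t (U * S * Vᵀ) * (1 - V * Vᵀ)‖ ≤ εrh) →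
        -- K-step and L-step of the augmented BUG half-step
        (∀ t ∈ Icc t₀ (t₀ + h / 2),
          HasDerivWithinAt K (F t (K t * V₀ᵀ) * V₀) (Icc t₀ (t₀ + h / 2)) t) →
        K t₀ = U₀ * S₀ →
        (∀ t ∈ Icc t₀ (t₀ + h / 2),
          HasDerivWithinAt Lm ((F t (U₀ * (Lm t)ᵀ))ᵀ * U₀) (Icc t₀ (t₀ + h / 2)) t) →
        Lm t₀ = V₀ * S₀ᵀ →
        -- augmented orthonormal bases of the half-step
        Uhatᵀ * Uhat = 1 → Vhatᵀ * Vhat = 1 →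
        Uhat * Uhatᵀ * U₀ = U₀ → Uhat * Uhatᵀ * K (t₀ + h / 2) = K (t₀ + h / 2) →
        Vhat * Vhatᵀ * V₀ = V₀ → Vhat * Vhatᵀ * Lm (t₀ + h / 2) = Lm (t₀ + h / 2) →
        -- Galerkin S-step of the half-step
        (∀ t ∈ Icc t₀ (t₀ + h / 2),
          HasDerivWithinAt Shat (Uhatᵀ * F t (Uhat * Shat t * Vhatᵀ) * Vhat)
            (Icc t₀ (t₀ + h / 2)) t) →
        Shat t₀ = Uhatᵀ * Y₀ * Vhat →
        Yhalf = Uhat * Shat (t₀ + h / 2) * Vhatᵀ →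
        -- augmented orthonormal bases of the Galerkin step
        Ubarᵀ * Ubar = 1 → Vbarᵀ * Vbar = 1 →
        Ubar * Ubarᵀ * Uhat = Uhat →
        Ubar * Ubarᵀ * (F (t₀ + h / 2) Yhalf * Vhat) = F (t₀ + h / 2) Yhalf * Vhat →
        Vbar * Vbarᵀ * Vhat = Vhat →
        Vbar * Vbarᵀ * ((F (t₀ + h / 2) Yhalf)ᵀ * Uhat) = (F (t₀ + h / 2) Yhalf)ᵀ * Uhat →
        -- Galerkin step over the full step
        (∀ t ∈ Icc t₀ (t₀ + h),
          HasDerivWithinAt Sbar (Ubarᵀ * F t (Ubar * Sbar t * Vbarᵀ) * Vbar)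
            (Icc t₀ (t₀ + h)) t) →
        Sbar t₀ = Ubarᵀ * Y₀ * Vbar →
        Ybar₁ = Ubar * Sbar (t₀ + h) * Vbarᵀ →
        ‖Ybar₁ - A (t₀ + h)‖ ≤ C * h * (h ^ 2 + h * εr + εrh) :=
  midpoint_bug_local_error_general m n r rh q L B M₂ M₃ hmax hL hB hM₂ hM₃
end

section
/- (Energy dissipation of the Galerkin step for gradient systems.) Let E : ℝ^{m×n} → ℝ be differentiable and let F : ℝ^{m×n} → ℝ^{m×n} satisfy, for all Y, Z ∈ ℝ^{m×n}, DE(Y)[Z] = −trace(F(Y)ᵀ Z) (i.e., F(Y) = −∇E(Y) with respect to the Frobenius inner product). Let Ū ∈ ℝ^{m×p}, V̄ ∈ ℝ^{n×p} have orthonormal columns and let S̄ : [t₀, t₁] → ℝ^{p×p} be differentiable with S̄'(t) = Ūᵀ F(Ū S̄(t) V̄ᵀ) V̄. Then the function t ↦ E(Ū S̄(t) V̄ᵀ) is nonincreasing on [t₀, t₁]; indeed its derivative equals −‖S̄'(t)‖² ≤ 0. -/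
open Matrix Set

attribute [local instance] Matrix.frobeniusNormedAddCommGroup Matrix.frobeniusNormedSpace

/-!
By the chain rule the energy has derivative `DE(Ū S̄ V̄ᵀ)[Ū S̄' V̄ᵀ] = −⟨F, Ū S̄' V̄ᵀ⟩`. The
Frobenius adjoint of `X ↦ Ū X V̄ᵀ` is `G ↦ Ūᵀ G V̄`, so this equals `−⟨Ūᵀ F V̄, S̄'⟩ = −‖S̄'‖²`
along the Galerkin flow; a nonpositive derivative makes the energy antitone.
-/

namespace Matrix

variable {l m n p : Type*} [Fintype l] [Fintype m] [Fintype n] [Fintype p]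

theorem frobenius_norm_sq_eq_trace_transpose_mul (A : Matrix m n ℝ) :
    ‖A‖ ^ 2 = trace (Aᵀ * A) := by
  have hsum : (0 : ℝ) ≤ ∑ i, ∑ j, ‖A i j‖ ^ (2 : ℝ) := by positivity
  rw [frobenius_norm_def, ← Real.rpow_natCast, ← Real.rpow_mul hsum, Finset.sum_comm]
  norm_num [trace, mul_apply, sq]

theorem trace_transpose_mul_sandwich {R : Type*} [CommRing R] (G : Matrix m n R)
    (U : Matrix m l R) (V : Matrix n p R) (X : Matrix l p R) :
    trace (Gᵀ * (U * X * Vᵀ)) = trace ((Uᵀ * G * V)ᵀ * X) := by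
  rw [← Matrix.mul_assoc, ← Matrix.mul_assoc, trace_mul_comm, transpose_mul, transpose_mul,
    transpose_transpose]
  simp only [Matrix.mul_assoc]

theorem hasDerivWithinAt_sandwich {S : ℝ → Matrix l p ℝ}
    {S' : Matrix l p ℝ} {s : Set ℝ} {t : ℝ} (hS : HasDerivWithinAt S S' s t)
    (U : Matrix m l ℝ) (V : Matrix p n ℝ) :
    HasDerivWithinAt (fun τ => U * S τ * V) (U * S' * V) s t := by
  let L : Matrix l p ℝ →ₗ[ℝ] Matrix m n ℝ :=
    { toFun := fun X => U * X * V
      map_add' := fun X Y => by simp only [Matrix.mul_add, Matrix.add_mul]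
      map_smul' := fun c X => by simp only [Matrix.mul_smul, Matrix.smul_mul, RingHom.id_apply] }
  exact L.toContinuousLinearMap.hasFDerivAt.comp_hasDerivWithinAt t hS

end Matrix

theorem galerkin_energy_dissipation_general (m n p : ℕ) (t₀ t₁ : ℝ)
    (E : Matrix (Fin m) (Fin n) ℝ → ℝ)
    (E' : Matrix (Fin m) (Fin n) ℝ → (Matrix (Fin m) (Fin n) ℝ →L[ℝ] ℝ))
    (hE : ∀ Y : Matrix (Fin m) (Fin n) ℝ, HasFDerivAt E (E' Y) Y)
    (F : Matrix (Fin m) (Fin n) ℝ → Matrix (Fin m) (Fin n) ℝ)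
    (hF : ∀ Y Z : Matrix (Fin m) (Fin n) ℝ, E' Y Z = -Matrix.trace ((F Y)ᵀ * Z))
    (Ubar : Matrix (Fin m) (Fin p) ℝ) (Vbar : Matrix (Fin n) (Fin p) ℝ)
    (Sbar : ℝ → Matrix (Fin p) (Fin p) ℝ)
    (hSbar : ∀ t ∈ Icc t₀ t₁,
      HasDerivWithinAt Sbar (Ubarᵀ * F (Ubar * Sbar t * Vbarᵀ) * Vbar) (Icc t₀ t₁) t) :
    AntitoneOn (fun t => E (Ubar * Sbar t * Vbarᵀ)) (Icc t₀ t₁) ∧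
    ∀ t ∈ Icc t₀ t₁,
      HasDerivWithinAt (fun s => E (Ubar * Sbar s * Vbarᵀ))
        (-‖Ubarᵀ * F (Ubar * Sbar t * Vbarᵀ) * Vbar‖ ^ 2) (Icc t₀ t₁) t := by
  have hderiv : ∀ t ∈ Icc t₀ t₁,
      HasDerivWithinAt (fun s => E (Ubar * Sbar s * Vbarᵀ))
        (-‖Ubarᵀ * F (Ubar * Sbar t * Vbarᵀ) * Vbar‖ ^ 2) (Icc t₀ t₁) t := by
    intro t ht
    refine ((hE _).comp_hasDerivWithinAt t
      (hasDerivWithinAt_sandwich (hSbar t ht) Ubar Vbarᵀ)).congr_deriv ((hF _ _).trans ?_)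
    rw [trace_transpose_mul_sandwich, frobenius_norm_sq_eq_trace_transpose_mul]
  refine ⟨antitoneOn_of_hasDerivWithinAt_nonpos (convex_Icc t₀ t₁)
    (fun t ht => (hderiv t ht).continuousWithinAt)
    (fun t ht => (hderiv t (interior_subset ht)).mono interior_subset)
    (fun t _ => neg_nonpos.mpr (sq_nonneg _)), hderiv⟩

/-- Energy dissipation of the Galerkin step for gradient systems: if `F(Y) = −∇E(Y)`
with respect to the Frobenius inner product (i.e. `DE(Y)[Z] = −trace(F(Y)ᵀ Z)`), then
along the Galerkin S-step `S̄' = Ūᵀ F(Ū S̄ V̄ᵀ) V̄` the energy `t ↦ E(Ū S̄(t) V̄ᵀ)` is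
nonincreasing; indeed its derivative equals `−‖S̄'(t)‖² ≤ 0`. -/
theorem galerkin_energy_dissipation (m n p : ℕ) (t₀ t₁ : ℝ) (ht : t₀ ≤ t₁)
    (E : Matrix (Fin m) (Fin n) ℝ → ℝ)
    (E' : Matrix (Fin m) (Fin n) ℝ → (Matrix (Fin m) (Fin n) ℝ →L[ℝ] ℝ))
    (hE : ∀ Y : Matrix (Fin m) (Fin n) ℝ, HasFDerivAt E (E' Y) Y)
    (F : Matrix (Fin m) (Fin n) ℝ → Matrix (Fin m) (Fin n) ℝ)
    (hF : ∀ Y Z : Matrix (Fin m) (Fin n) ℝ, E' Y Z = -Matrix.trace ((F Y)ᵀ * Z))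
    (Ubar : Matrix (Fin m) (Fin p) ℝ) (Vbar : Matrix (Fin n) (Fin p) ℝ)
    (hU : Ubarᵀ * Ubar = 1) (hV : Vbarᵀ * Vbar = 1)
    (Sbar : ℝ → Matrix (Fin p) (Fin p) ℝ)
    (hSbar : ∀ t ∈ Icc t₀ t₁,
      HasDerivWithinAt Sbar (Ubarᵀ * F (Ubar * Sbar t * Vbarᵀ) * Vbar) (Icc t₀ t₁) t) :
    AntitoneOn (fun t => E (Ubar * Sbar t * Vbarᵀ)) (Icc t₀ t₁) ∧
    ∀ t ∈ Icc t₀ t₁,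
      HasDerivWithinAt (fun s => E (Ubar * Sbar s * Vbarᵀ))
        (-‖Ubarᵀ * F (Ubar * Sbar t * Vbarᵀ) * Vbar‖ ^ 2) (Icc t₀ t₁) t :=
  galerkin_energy_dissipation_general m n p t₀ t₁ E E' hE F hF Ubar Vbar Sbar hSbar
end
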